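/- Let K₀ > 0 and F₀ > 0 with a₀ := (F₀/K₀)^{1/3}, and suppose λ : [0,∞) → ℝ is differentiable, positive, satisfies λ(0) = 1 and λ'(t) = -(2/3)·K₀ + (2/3)·F₀·λ(t)⁻³ for all t ≥ 0. If a₀ > 1 then λ is nondecreasing and λ(t) < a₀ for all t ≥ 0; if a₀ < 1 then λ is nonincreasing and λ(t) > a₀ for all t ≥ 0; and if a₀ = 1 then λ(t) = 1 for all t ≥ 0. -/

import Mathlib

/-!
With `a₀³ = F₀ / K₀` the right-hand side of the ODE is `(2/3) K₀ (a₀³ - λ³) / λ³`, a locally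
Lipschitz vector field on `(0, ∞)` vanishing only at `a₀`. By uniqueness of solutions, a
solution that meets the equilibrium `a₀` at some time is constantly `a₀`, so a solution
starting at `1 ≠ a₀` never crosses `a₀` and stays on the side where it starts. There the
vector field has a constant sign, which makes the solution monotone.
-/

open Set

section AutonomousODE

variable {E : Type*} [NormedAddCommGroup E] [NormedSpace ℝ E]
  {v : E → E} {U : Set E} {γ : ℝ → E} {x₀ : E} {a b t₀ : ℝ}

theorem ODE_solution_eqOn_equilibrium_of_mem_Icc (hv : LocallyLipschitzOn U v)
    (hx₀ : v x₀ = 0) (hx₀U : x₀ ∈ U)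
    (hγ : ∀ t ∈ Icc a b, HasDerivWithinAt γ (v (γ t)) (Ici a) t)
    (hγU : ∀ t ∈ Icc a b, γ t ∈ U) (ht₀ : t₀ ∈ Icc a b) (hγt₀ : γ t₀ = x₀) :
    EqOn γ (fun _ ↦ x₀) (Icc a b) := by
  have hcont : ContinuousOn γ (Icc a b) := fun t ht ↦
    (hγ t ht).continuousWithinAt.mono Icc_subset_Ici_self
  set S := insert x₀ (γ '' Icc a b)
  obtain ⟨K, hK⟩ : ∃ K, LipschitzOnWith K v S :=
    (hv.mono (insert_subset hx₀U (image_subset_iff.2 hγU))).exists_lipschitzOnWith_of_compact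
      ((isCompact_Icc.image_of_continuousOn hcont).insert x₀)
  have hγS : ∀ t ∈ Icc a b, γ t ∈ S := fun t ht ↦ mem_insert_of_mem _ (mem_image_of_mem γ ht)
  have hconst : ∀ (s : Set ℝ) (t : ℝ), HasDerivWithinAt (fun _ ↦ x₀) (v x₀) s t :=
    fun s t ↦ hx₀ ▸ hasDerivWithinAt_const t s x₀
  rw [← Icc_union_Icc_eq_Icc ht₀.1 ht₀.2]
  refine EqOn.union ?_ ?_
  · have hsub : Ioc a t₀ ⊆ Icc a b := fun t ht ↦ ⟨ht.1.le, ht.2.trans ht₀.2⟩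
    exact ODE_solution_unique_of_mem_Icc_left (v := fun _ ↦ v) (s := fun _ ↦ S)
      (fun _ _ ↦ hK) (hcont.mono (Icc_subset_Icc_right ht₀.2))
      (fun t ht ↦ ((hγ t (hsub ht)).hasDerivAt (Ici_mem_nhds ht.1)).hasDerivWithinAt)
      (fun t ht ↦ hγS t (hsub ht)) continuousOn_const (fun t _ ↦ hconst _ t)
      (fun _ _ ↦ mem_insert x₀ _) hγt₀
  · have hsub : Ico t₀ b ⊆ Icc a b := fun t ht ↦ ⟨ht₀.1.trans ht.1, ht.2.le⟩
    exact ODE_solution_unique_of_mem_Icc_right (v := fun _ ↦ v) (s := fun _ ↦ S)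
      (fun _ _ ↦ hK) (hcont.mono (Icc_subset_Icc_left ht₀.1))
      (fun t ht ↦ (hγ t (hsub ht)).mono (Ici_subset_Ici.2 (hsub ht).1))
      (fun t ht ↦ hγS t (hsub ht)) continuousOn_const (fun t _ ↦ hconst _ t)
      (fun _ _ ↦ mem_insert x₀ _) hγt₀

theorem ODE_solution_eqOn_equilibrium (hv : LocallyLipschitzOn U v)
    (hx₀ : v x₀ = 0) (hx₀U : x₀ ∈ U)
    (hγ : ∀ t ∈ Ici a, HasDerivWithinAt γ (v (γ t)) (Ici a) t)
    (hγU : ∀ t ∈ Ici a, γ t ∈ U) (ht₀ : a ≤ t₀) (hγt₀ : γ t₀ = x₀) :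
    EqOn γ (fun _ ↦ x₀) (Ici a) := fun t ht ↦
  ODE_solution_eqOn_equilibrium_of_mem_Icc (b := max t t₀) hv hx₀ hx₀U
    (fun s hs ↦ hγ s hs.1) (fun s hs ↦ hγU s hs.1) ⟨ht₀, le_max_right t t₀⟩ hγt₀
    ⟨ht, le_max_left t t₀⟩

end AutonomousODE

section ScalarODE

variable {v : ℝ → ℝ} {U : Set ℝ} {γ : ℝ → ℝ} {x₀ a : ℝ}

theorem ODE_solution_lt_equilibrium (hv : LocallyLipschitzOn U v)
    (hx₀ : v x₀ = 0) (hx₀U : x₀ ∈ U)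
    (hγ : ∀ t ∈ Ici a, HasDerivWithinAt γ (v (γ t)) (Ici a) t)
    (hγU : ∀ t ∈ Ici a, γ t ∈ U) (hγa : γ a < x₀) : ∀ t ∈ Ici a, γ t < x₀ := by
  intro t ht
  by_contra! hle
  obtain ⟨s, hs, hγs⟩ := intermediate_value_Icc (mem_Ici.1 ht)
    (fun s hs ↦ (hγ s hs.1).continuousWithinAt.mono Icc_subset_Ici_self) ⟨hγa.le, hle⟩
  exact hγa.ne (ODE_solution_eqOn_equilibrium hv hx₀ hx₀U hγ hγU hs.1 hγs (mem_Ici.2 le_rfl))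

theorem ODE_solution_equilibrium_lt (hv : LocallyLipschitzOn U v)
    (hx₀ : v x₀ = 0) (hx₀U : x₀ ∈ U)
    (hγ : ∀ t ∈ Ici a, HasDerivWithinAt γ (v (γ t)) (Ici a) t)
    (hγU : ∀ t ∈ Ici a, γ t ∈ U) (hγa : x₀ < γ a) : ∀ t ∈ Ici a, x₀ < γ t := by
  intro t ht
  by_contra! hle
  obtain ⟨s, hs, hγs⟩ := intermediate_value_Icc' (mem_Ici.1 ht)
    (fun s hs ↦ (hγ s hs.1).continuousWithinAt.mono Icc_subset_Ici_self) ⟨hle, hγa.le⟩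
  exact hγa.ne' (ODE_solution_eqOn_equilibrium hv hx₀ hx₀U hγ hγU hs.1 hγs (mem_Ici.2 le_rfl))

theorem monotoneOn_Ici_of_hasDerivWithinAt_nonneg {f f' : ℝ → ℝ}
    (hf : ∀ t ∈ Ici a, HasDerivWithinAt f (f' t) (Ici a) t) (hf'₀ : ∀ t ∈ Ioi a, 0 ≤ f' t) :
    MonotoneOn f (Ici a) :=
  monotoneOn_of_hasDerivWithinAt_nonneg (convex_Ici a) (fun t ht ↦ (hf t ht).continuousWithinAt)
    (by simpa only [interior_Ici] using
      fun t ht ↦ (hf t (Ioi_subset_Ici_self ht)).mono Ioi_subset_Ici_self)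
    (by simpa only [interior_Ici] using hf'₀)

theorem antitoneOn_Ici_of_hasDerivWithinAt_nonpos {f f' : ℝ → ℝ}
    (hf : ∀ t ∈ Ici a, HasDerivWithinAt f (f' t) (Ici a) t) (hf'₀ : ∀ t ∈ Ioi a, f' t ≤ 0) :
    AntitoneOn f (Ici a) :=
  antitoneOn_of_hasDerivWithinAt_nonpos (convex_Ici a) (fun t ht ↦ (hf t ht).continuousWithinAt)
    (by simpa only [interior_Ici] using
      fun t ht ↦ (hf t (Ioi_subset_Ici_self ht)).mono Ioi_subset_Ici_self)
    (by simpa only [interior_Ici] using hf'₀)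

end ScalarODE

section ReducedRicciFlow

noncomputable def reducedRicciField (K F x : ℝ) : ℝ := -(2/3) * K + (2/3) * F * (x ^ 3)⁻¹

theorem locallyLipschitzOn_reducedRicciField (K F : ℝ) :
    LocallyLipschitzOn (Ioi 0) (reducedRicciField K F) := by
  refine ContDiffOn.locallyLipschitzOn (convex_Ioi 0) ?_
  unfold reducedRicciField
  fun_prop (disch := exact fun x hx ↦ pow_ne_zero 3 (ne_of_gt hx))

theorem reducedRicciField_eq {K a x : ℝ} (hx : x ≠ 0) :
    reducedRicciField K (K * a ^ 3) x = 2/3 * K * (a ^ 3 - x ^ 3) / x ^ 3 := by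
  unfold reducedRicciField
  field_simp
  ring

theorem reducedRicciField_self {K a : ℝ} (ha : a ≠ 0) : reducedRicciField K (K * a ^ 3) a = 0 := by
  simp [reducedRicciField_eq ha]

theorem reducedRicciField_pos {K a x : ℝ} (hK : 0 < K) (hx : 0 < x) (hxa : x < a) :
    0 < reducedRicciField K (K * a ^ 3) x := by
  rw [reducedRicciField_eq hx.ne']
  have : x ^ 3 < a ^ 3 := pow_lt_pow_left₀ hxa hx.le (by norm_num)
  have : 0 < a ^ 3 - x ^ 3 := by linarith
  positivity

theorem reducedRicciField_neg {K a x : ℝ} (hK : 0 < K) (ha : 0 < a) (hax : a < x) :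
    reducedRicciField K (K * a ^ 3) x < 0 := by
  have hx : 0 < x := ha.trans hax
  rw [reducedRicciField_eq hx.ne']
  have : a ^ 3 < x ^ 3 := pow_lt_pow_left₀ hax ha.le (by norm_num)
  exact div_neg_of_neg_of_pos (by nlinarith) (by positivity)

end ReducedRicciFlow

theorem rpow_one_third_pow_three {x : ℝ} (hx : 0 ≤ x) : (x ^ ((1:ℝ)/3)) ^ 3 = x := by
  simpa [one_div] using Real.rpow_inv_natCast_pow hx (n := 3) (by norm_num)

/-- For `K₀ > 0`, `F₀ > 0` and `a₀ = (F₀/K₀)^{1/3}`, any positive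
solution of the reduced normalized ODE on `[0,∞)` with `λ(0) = 1` satisfies: if `a₀ > 1`
then `λ` is nondecreasing and `λ(t) < a₀` for all `t ≥ 0`; if `a₀ < 1` then `λ` is
nonincreasing and `λ(t) > a₀` for all `t ≥ 0`; and if `a₀ = 1` then `λ ≡ 1`. -/
theorem stmt_15 (K₀ F₀ : ℝ) (hK₀ : 0 < K₀) (hF₀ : 0 < F₀) (a₀ : ℝ)
    (ha₀ : a₀ = (F₀ / K₀) ^ ((1:ℝ)/3))
    (lam : ℝ → ℝ) (hpos : ∀ t ∈ Set.Ici (0:ℝ), 0 < lam t) (hl0 : lam 0 = 1)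
    (hode : ∀ t ∈ Set.Ici (0:ℝ),
      HasDerivWithinAt lam (-(2/3) * K₀ + (2/3) * F₀ * ((lam t)^3)⁻¹) (Set.Ici 0) t) :
    (1 < a₀ → MonotoneOn lam (Set.Ici 0) ∧ ∀ t ∈ Set.Ici (0:ℝ), lam t < a₀) ∧
    (a₀ < 1 → AntitoneOn lam (Set.Ici 0) ∧ ∀ t ∈ Set.Ici (0:ℝ), a₀ < lam t) ∧
    (a₀ = 1 → ∀ t ∈ Set.Ici (0:ℝ), lam t = 1) := by
  have ha₀pos : 0 < a₀ := ha₀ ▸ Real.rpow_pos_of_pos (div_pos hF₀ hK₀) _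
  have hF : F₀ = K₀ * a₀ ^ 3 := by
    rw [ha₀, rpow_one_third_pow_three (div_pos hF₀ hK₀).le]; field_simp
  subst hF
  have hode' : ∀ t ∈ Ici (0:ℝ),
      HasDerivWithinAt lam (reducedRicciField K₀ (K₀ * a₀ ^ 3) (lam t)) (Ici 0) t := hode
  have hLip := locallyLipschitzOn_reducedRicciField K₀ (K₀ * a₀ ^ 3)
  have hequil := reducedRicciField_self (K := K₀) ha₀pos.ne'
  refine ⟨fun h1 ↦ ?_, fun h1 ↦ ?_, fun h1 t ht ↦ ?_⟩
  · have hlt := ODE_solution_lt_equilibrium hLip hequil ha₀pos hode' hpos (hl0 ▸ h1)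
    refine ⟨monotoneOn_Ici_of_hasDerivWithinAt_nonneg hode' fun t ht ↦ ?_, hlt⟩
    have ht' : t ∈ Ici (0:ℝ) := Ioi_subset_Ici_self ht
    exact (reducedRicciField_pos hK₀ (hpos t ht') (hlt t ht')).le
  · have hgt := ODE_solution_equilibrium_lt hLip hequil ha₀pos hode' hpos (hl0 ▸ h1)
    refine ⟨antitoneOn_Ici_of_hasDerivWithinAt_nonpos hode' fun t ht ↦ ?_, hgt⟩
    exact (reducedRicciField_neg hK₀ ha₀pos (hgt t (Ioi_subset_Ici_self ht))).le
  · rw [← h1] at hl0 ⊢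
    exact ODE_solution_eqOn_equilibrium hLip hequil ha₀pos hode' hpos le_rfl hl0 ht
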